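/- arXiv:1105.2355 — 2 statements merged into one kernel-verified Lean document; each statement's English description precedes it below -/
import Mathlib

section
/- Let f be a real polynomial of degree n with nonzero leading coefficient and discriminant sequence [D_1(f),…,D_n(f)]. If for some 0 ≤ j ≤ n the last j members of the discriminant sequence vanish, i.e. D_{n−j+1}(f) = ⋯ = D_n(f) = 0, then f has at most n − j distinct roots in ℂ. -/
/-!
Let `g = gcd(f, f')`. Over `ℂ` a root of `f` of multiplicity `m` is a root of `g` of
multiplicity at most `m - 1`, so `deg g + #{distinct roots} ≤ n`. Put `k = n - deg g`. The first
`2k` rows of the discrimination matrix, read against its first `2k` columns, are the coefficient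
vectors of `X^(k-1-i) f` and `X^(k-1-i) f'` in degrees `n + k - 1, …, n - k`. A left null vector
would therefore give `U, W` of degree `< k` with `deg (f U + f' W) < n - k = deg g`; since `g`
divides `f U + f' W`, it vanishes, and then `f / g` (of degree `k`) divides `W`, forcing
`W = U = 0`. Hence `D_k(f) ≠ 0`, so `k ≤ n - j` whenever the last `j` discriminants vanish.
-/

open Polynomial

/-- Entry `(r, c)` (0-indexed) of the discrimination matrix of a real polynomial `f`
regarded as having degree `n`.  Even rows `2*i` carry the coefficient vector
`(a₀, a₁, …, aₙ)` of `f` (where `aₘ = f.coeff (n - m)`) shifted `i` columns to the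
right; odd rows `2*i+1` carry the coefficient vector `(n·a₀, (n-1)·a₁, …, a_{n-1})`
of the derivative `f'` preceded by one zero and shifted `i` columns to the right. -/
def discEntry (n : ℕ) (f : Polynomial ℝ) (r c : ℕ) : ℝ :=
  if r % 2 = 0 then
    if r / 2 ≤ c ∧ c ≤ r / 2 + n then f.coeff (n - (c - r / 2)) else 0
  else
    if r / 2 + 1 ≤ c ∧ c ≤ r / 2 + n then
      ((n - (c - (r / 2 + 1)) : ℕ) : ℝ) * f.coeff (n - (c - (r / 2 + 1)))
    else 0

/-- The `k`-th discriminant `D_k(f)`: the determinant of the submatrix of the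
discrimination matrix formed by its first `2k` rows and first `2k` columns. -/
def discSeq (n : ℕ) (f : Polynomial ℝ) (k : ℕ) : ℝ :=
  Matrix.det (Matrix.of fun i j : Fin (2 * k) => discEntry n f i j)

theorem Finset.sum_range_two_mul {M : Type*} [AddCommMonoid M] (k : ℕ) (F : ℕ → M) :
    ∑ r ∈ range (2 * k), F r = ∑ i ∈ range k, (F (2 * i) + F (2 * i + 1)) := by
  induction k with
  | zero => simp
  | succ k ih =>
    rw [Nat.mul_succ, sum_range_succ, sum_range_succ, add_assoc, ih, sum_range_succ]

namespace Polynomial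

section Roots

variable {R : Type*} [CommRing R] [IsDomain R] [CharZero R] [DecidableEq R]

theorem roots_add_dedup_le_roots {F G : R[X]} (hF : F ≠ 0) (hGF : G ∣ F)
    (hGF' : G ∣ derivative F) : G.roots + F.roots.dedup ≤ F.roots := by
  refine Multiset.le_iff_count.mpr fun r => ?_
  rw [Multiset.count_add, Multiset.count_dedup, count_roots, count_roots]
  split_ifs with hr
  · have hroot : F.IsRoot r := isRoot_of_mem_roots hr
    have hF' : derivative F ≠ 0 := fun h0 => by
      rw [eq_C_of_natDegree_eq_zero (derivative_eq_zero.mp h0)] at hroot hF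
      exact hF (by simpa using hroot)
    have hmult := rootMultiplicity_le_rootMultiplicity_of_dvd hF' hGF' r
    rw [derivative_rootMultiplicity_of_root hroot] at hmult
    have hpos := (rootMultiplicity_pos hF).mpr hroot
    omega
  · have hmult := rootMultiplicity_le_rootMultiplicity_of_dvd hF hGF r
    rw [rootMultiplicity_eq_zero fun h => hr ((mem_roots hF).mpr h)] at hmult ⊢
    omega

theorem natDegree_add_card_roots_toFinset_le {K : Type*} [Field K] [IsAlgClosed K] [CharZero K]
    [DecidableEq K] {F G : K[X]} (hF : F ≠ 0) (hGF : G ∣ F) (hGF' : G ∣ derivative F) :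
    G.natDegree + F.roots.toFinset.card ≤ F.natDegree := by
  have hcard := Multiset.card_le_card (roots_add_dedup_le_roots hF hGF hGF')
  rwa [Multiset.card_add, IsAlgClosed.card_roots_eq_natDegree,
    IsAlgClosed.card_roots_eq_natDegree] at hcard

end Roots

theorem eq_zero_of_degree_mul_add_mul_lt_degree_gcd {K : Type*} [Field K] [DecidableEq K]
    {a b U W : K[X]} (ha : a ≠ 0) (hW : W.natDegree + (gcd a b).natDegree < a.natDegree)
    (hp : (a * U + b * W).degree < (gcd a b).degree) : U = 0 ∧ W = 0 := by
  have hg : gcd a b ≠ 0 := gcd_ne_zero_of_left ha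
  have ha' : gcd a b * (a / gcd a b) = a := EuclideanDomain.mul_div_cancel' hg (gcd_dvd_left a b)
  have hb' : gcd a b * (b / gcd a b) = b := EuclideanDomain.mul_div_cancel' hg (gcd_dvd_right a b)
  have hzero : a * U + b * W = 0 := by
    by_contra hne
    refine not_le.mpr hp (degree_le_of_dvd (dvd_add ?_ ?_) hne)
    · exact dvd_mul_of_dvd_left (gcd_dvd_left a b) U
    · exact dvd_mul_of_dvd_left (gcd_dvd_right a b) W
  have hquot : a / gcd a b * U + b / gcd a b * W = 0 := by
    apply mul_left_cancel₀ hg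
    rw [mul_zero, mul_add, ← mul_assoc, ← mul_assoc, ha', hb', hzero]
  have hW0 : W = 0 := by
    by_contra hW0
    have hdvd : a / gcd a b ∣ W :=
      (isCoprime_div_gcd_div_gcd_of_gcd_ne_zero hg).dvd_of_dvd_mul_left
        ⟨-U, by linear_combination hquot⟩
    have hdeg := natDegree_mul hg (left_div_gcd_ne_zero ha : a / gcd a b ≠ 0)
    rw [ha'] at hdeg
    have hle := natDegree_le_of_dvd hdvd hW0
    omega
  refine ⟨?_, hW0⟩
  simpa [hW0, ha] using hzero

/-- Coefficients listed from the top degree down, as in the rows of the discrimination matrix. -/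
noncomputable def ofDescCoeffs {R : Type*} [Semiring R] (k : ℕ) (a : ℕ → R) : R[X] :=
  ∑ i ∈ Finset.range k, C (a i) * X ^ (k - 1 - i)

section ofDescCoeffs

variable {R : Type*} [Semiring R] {k : ℕ} (a : ℕ → R)

theorem coeff_ofDescCoeffs {i : ℕ} (hi : i < k) : (ofDescCoeffs k a).coeff (k - 1 - i) = a i := by
  rw [ofDescCoeffs, finsetSum_coeff, Finset.sum_eq_single_of_mem i (Finset.mem_range.mpr hi)]
  · simp
  · intro j hj hji
    rw [coeff_C_mul_X_pow, if_neg (by rw [Finset.mem_range] at hj; omega)]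

theorem natDegree_ofDescCoeffs_le : (ofDescCoeffs k a).natDegree ≤ k - 1 :=
  natDegree_sum_le_of_forall_le _ _ fun _ _ =>
    (natDegree_C_mul_X_pow_le _ _).trans (Nat.sub_le _ _)

theorem eq_zero_of_ofDescCoeffs_eq_zero (h : ofDescCoeffs k a = 0) {i : ℕ} (hi : i < k) :
    a i = 0 := by
  rw [← coeff_ofDescCoeffs a hi, h, coeff_zero]

end ofDescCoeffs

end Polynomial

section DiscriminationMatrix

variable {n k i c : ℕ} {f : ℝ[X]}

theorem discEntry_two_mul (hf : f.natDegree ≤ n) (hi : i < k) (hc : c < n + k) :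
    discEntry n f (2 * i) c = (f * X ^ (k - 1 - i)).coeff (n + k - 1 - c) := by
  rw [discEntry, if_pos (by omega), Nat.mul_div_cancel_left i two_pos, coeff_mul_X_pow']
  by_cases hic : c < i
  · rw [if_neg (by omega), if_pos (by omega), coeff_eq_zero_of_natDegree_lt (by omega)]
  by_cases hci : c ≤ i + n
  · rw [if_pos (by omega), if_pos (by omega)]
    congr 1
    omega
  · rw [if_neg (by omega), if_neg (by omega)]

theorem discEntry_two_mul_add_one (hf : f.natDegree ≤ n) (hi : i < k) (hc : c < n + k) :
    discEntry n f (2 * i + 1) c = (derivative f * X ^ (k - 1 - i)).coeff (n + k - 1 - c) := by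
  rw [discEntry, if_neg (by omega), (by omega : (2 * i + 1) / 2 = i), coeff_mul_X_pow']
  by_cases hic : c ≤ i
  · rw [if_neg (by omega), if_pos (by omega), coeff_derivative,
      coeff_eq_zero_of_natDegree_lt (by omega), zero_mul]
  by_cases hci : c ≤ i + n
  · have hm : n - (c - (i + 1)) = n + k - 1 - c - (k - 1 - i) + 1 := by omega
    rw [if_pos (by omega), if_pos (by omega), coeff_derivative, hm, Nat.cast_succ, mul_comm]
  · rw [if_neg (by omega), if_neg (by omega)]

theorem sum_mul_discEntry (hf : f.natDegree ≤ n) (w : ℕ → ℝ) (hc : c < n + k) :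
    ∑ r ∈ Finset.range (2 * k), w r * discEntry n f r c =
      (f * ofDescCoeffs k (fun i => w (2 * i)) +
        derivative f * ofDescCoeffs k (fun i => w (2 * i + 1))).coeff (n + k - 1 - c) := by
  rw [Finset.sum_range_two_mul, ofDescCoeffs, ofDescCoeffs, Finset.mul_sum, Finset.mul_sum,
    ← Finset.sum_add_distrib, finsetSum_coeff]
  refine Finset.sum_congr rfl fun i hi => ?_
  rw [Finset.mem_range] at hi
  rw [discEntry_two_mul hf hi hc, discEntry_two_mul_add_one hf hi hc, coeff_add, mul_left_comm,
    coeff_C_mul, mul_left_comm, coeff_C_mul]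

theorem discSeq_ne_zero_of_natDegree_gcd (hdeg : f.natDegree = n) (hk : 0 < k) (hkn : k ≤ n)
    (hgcd : (gcd f (derivative f)).natDegree = n - k) : discSeq n f k ≠ 0 := by
  intro hdet
  obtain ⟨v, hv0, hv⟩ := Matrix.exists_vecMul_eq_zero_iff.mpr hdet
  let w : ℕ → ℝ := fun r => if h : r < 2 * k then v ⟨r, h⟩ else 0
  have hw (r : Fin (2 * k)) : w r = v r := dif_pos r.isLt
  set U := ofDescCoeffs k fun i => w (2 * i)
  set W := ofDescCoeffs k fun i => w (2 * i + 1)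
  have hf0 : f ≠ 0 := by rintro rfl; simp at hdeg; omega
  have hUdeg : U.natDegree ≤ k - 1 := natDegree_ofDescCoeffs_le _
  have hWdeg : W.natDegree ≤ k - 1 := natDegree_ofDescCoeffs_le _
  have hnatDegree_lt : (f * U + derivative f * W).natDegree < n + k := by
    have hf' := natDegree_derivative_le f
    refine (natDegree_add_le _ _).trans_lt (max_lt ?_ ?_) <;>
      refine natDegree_mul_le.trans_lt ?_ <;> omega
  have hcoeff : ∀ d, n - k ≤ d → (f * U + derivative f * W).coeff d = 0 := by
    intro d hd
    by_cases hdn : d < n + k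
    · have hc : n + k - 1 - d < n + k := by omega
      rw [(by omega : d = n + k - 1 - (n + k - 1 - d)), ← sum_mul_discEntry hdeg.le w hc]
      have hcol := congrFun hv ⟨n + k - 1 - d, by omega⟩
      simpa [Matrix.vecMul, dotProduct, ← Fin.sum_univ_eq_sum_range, hw] using hcol
    · exact coeff_eq_zero_of_natDegree_lt (by omega)
  have hdeg_lt : (f * U + derivative f * W).degree < (gcd f (derivative f)).degree := by
    rw [degree_eq_natDegree (gcd_ne_zero_of_left hf0), hgcd, degree_lt_iff_coeff_zero]
    exact hcoeff
  obtain ⟨hU, hW⟩ := eq_zero_of_degree_mul_add_mul_lt_degree_gcd hf0 (by omega) hdeg_lt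
  apply hv0
  funext r
  rw [← hw r]
  obtain ⟨i, hi | hi⟩ := Nat.even_or_odd' r
  · rw [hi]; exact eq_zero_of_ofDescCoeffs_eq_zero _ hU (by omega)
  · rw [hi]; exact eq_zero_of_ofDescCoeffs_eq_zero _ hW (by omega)

end DiscriminationMatrix

theorem statement1_general (n j : ℕ) (f : Polynomial ℝ) (hf : f ≠ 0)
    (hdeg : f.natDegree = n)
    (h : ∀ k, n - j < k → k ≤ n → discSeq n f k = 0) :
    (f.map (algebraMap ℝ ℂ)).roots.toFinset.card ≤ n - j := by
  have hroots : (gcd f (derivative f)).natDegree +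
      (f.map (algebraMap ℝ ℂ)).roots.toFinset.card ≤ n := by
    have hbound := natDegree_add_card_roots_toFinset_le (map_ne_zero hf)
      (map_dvd (algebraMap ℝ ℂ) (gcd_dvd_left f (derivative f)))
      (by rw [derivative_map]; exact map_dvd (algebraMap ℝ ℂ) (gcd_dvd_right f (derivative f)))
    rwa [natDegree_map, natDegree_map, hdeg] at hbound
  by_contra! hcard
  exact discSeq_ne_zero_of_natDegree_gcd hdeg (k := n - (gcd f (derivative f)).natDegree)
    (by omega) (by omega) (by omega) (h _ (by omega) (by omega))

/-- Let `f` be a real polynomial of degree `n` with nonzero leading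
coefficient and discriminant sequence `[D₁(f), …, Dₙ(f)]`.  If for some `0 ≤ j ≤ n`
the last `j` members of the discriminant sequence vanish, i.e.
`D_{n-j+1}(f) = ⋯ = Dₙ(f) = 0`, then `f` has at most `n - j` distinct roots in `ℂ`. -/
theorem statement1 (n j : ℕ) (hj : j ≤ n) (f : Polynomial ℝ) (hf : f ≠ 0)
    (hdeg : f.natDegree = n)
    (h : ∀ k, n - j < k → k ≤ n → discSeq n f k = 0) :
    (f.map (algebraMap ℝ ℂ)).roots.toFinset.card ≤ n - j :=
  statement1_general n j f hf hdeg h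
end

section
/- Let f be a real polynomial of degree n with nonzero leading coefficient, and suppose the revised sign list of its discriminant sequence contains exactly k zeros. Then the polynomial Δ_k(f) of the multiple factor sequence is a greatest common divisor of f and its derivative f′; that is, Δ_k(f) equals gcd(f, f′) up to a nonzero real constant factor. -/
/-!
Let `m = n - k`. Row `r < 2m` of the discrimination matrix, read as a polynomial (the entry
in column `c` being the coefficient of `X^(n+m-1-c)`), is `f · X^j` or `f' · X^j`. Replacing
the last column of `M(m, 0)` by `∑ₗ X^(k-l) · (column 2m-1+l)` gives a polynomial matrix with
determinant `Δ_k(f)`; adding `X^(n+m-1-c)` times every other column `c` turns that column into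
these row polynomials, so by Cramer's rule `gcd(f, f')` divides `Δ_k(f)`, whose coefficient of
`X^k` is `D_(n-k)`.

Conversely, for `d = deg gcd(f, f')` one has `D_(n-d) ≠ 0`: a left kernel vector would give
`u f + w f'` with `deg u, deg w < n - d` and all coefficients of degree `≥ d` zero, hence zero
as a multiple of the gcd; Bezout then forces `u = w = 0`.

As `D_1 = n a₀² ≠ 0`, the revised sign list has exactly `n - t` zeros, `D_t` being the last
nonzero discriminant. So `k = n - t`, `deg Δ_k(f) = k ≤ d` by the above, and `d ≤ k` by
divisibility.
-/

open Polynomial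

/-- `sign(x)` : `1, 0, -1` according as `x > 0`, `x = 0`, `x < 0`. -/
noncomputable def signOf (x : ℝ) : ℤ := if 0 < x then 1 else if x < 0 then -1 else 0

/-- The sign list `[sign D₁(f), …, sign Dₙ(f)]` of the discriminant sequence. -/
noncomputable def signList (n : ℕ) (f : Polynomial ℝ) : List ℤ :=
  (List.range n).map fun i => signOf (discSeq n f (i + 1))

/-- The `p`-th entry of the revised sign list obtained from a sign list `s`:
nonzero entries are unchanged; an internal zero (one with some nonzero entry before
it and some nonzero entry after it) at distance `t` from the nearest nonzero entry
`sᵢ` to its left is replaced by `(-1)^⌊(t+1)/2⌋ · sᵢ` (the period-four pattern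
`-sᵢ, -sᵢ, sᵢ, sᵢ, …`); trailing zeros are unchanged. -/
noncomputable def revisedEntry (s : List ℤ) (p : ℕ) : ℤ := by
  classical
  exact
    if s.getD p 0 ≠ 0 then s.getD p 0
    else if (∃ i < p, s.getD i 0 ≠ 0) ∧ (∃ j < s.length, p < j ∧ s.getD j 0 ≠ 0) then
      (-1) ^ ((p - Nat.findGreatest (fun i => s.getD i 0 ≠ 0) p + 1) / 2) *
        s.getD (Nat.findGreatest (fun i => s.getD i 0 ≠ 0) p) 0
    else 0

/-- The revised sign list of a sign list `s`. -/
noncomputable def revisedSignList (s : List ℤ) : List ℤ :=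
  (List.range s.length).map (revisedEntry s)

/-- The number of sign changes in a list of signs. -/
def signChanges (l : List ℤ) : ℕ :=
  (l.zip l.tail).countP fun p => decide (p.1 * p.2 < 0)

/-- The `2k × 2k` submatrix `M(k, l)` of the discrimination matrix of `f` (regarded
as having degree `n`), formed by its first `2k` rows together with its first
`2k - 1` columns and its `(2k + l)`-th column (1-indexed). -/
def subM (n : ℕ) (f : Polynomial ℝ) (k l : ℕ) : Matrix (Fin (2 * k)) (Fin (2 * k)) ℝ :=
  Matrix.of fun i j =>
    discEntry n f i (if (j : ℕ) < 2 * k - 1 then (j : ℕ) else 2 * k - 1 + l)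

/-- The polynomial `Δ_k(f) = Σ_{i=0}^{k} det(M(n-k, i)) · x^{k-i}` of the multiple
factor sequence of `f`. -/
noncomputable def deltaPoly (n : ℕ) (f : Polynomial ℝ) (k : ℕ) : Polynomial ℝ :=
  ∑ i ∈ Finset.range (k + 1),
    Polynomial.C (Matrix.det (subM n f (n - k) i)) * Polynomial.X ^ (k - i)

section GcdBound
variable {K : Type*} [Field K] [DecidableEq K]

theorem natDegree_le_natDegree_gcd_add_of_mul_add_mul_eq_zero {f g u w : K[X]} (hw : w ≠ 0)
    (hcomb : u * f + w * g = 0) :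
    f.natDegree ≤ (EuclideanDomain.gcd f g).natDegree + w.natDegree := by
  rcases eq_or_ne f 0 with rfl | hf
  · simp
  have hgcd : EuclideanDomain.gcd f g ≠ 0 := fun h => hf (EuclideanDomain.gcd_eq_zero_iff.mp h).1
  -- Bezout: `w · gcd f g = w f a + (w g) b`, and `w g = -u f`.
  have hdvd : f ∣ w * EuclideanDomain.gcd f g := by
    rw [EuclideanDomain.gcd_eq_gcd_ab f g]
    exact ⟨w * EuclideanDomain.gcdA f g - u * EuclideanDomain.gcdB f g,
      by linear_combination EuclideanDomain.gcdB f g * hcomb⟩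
  have := natDegree_le_of_dvd hdvd (mul_ne_zero hw hgcd)
  rwa [natDegree_mul hw hgcd, add_comm] at this

end GcdBound

namespace Matrix
variable {R ι : Type*} [CommRing R] [Fintype ι] [DecidableEq ι]

theorem dvd_det_mul_of_dvd_mulVec (M : Matrix ι ι R) {y : ι → R} {a : R}
    (h : ∀ r, a ∣ (M *ᵥ y) r) (j : ι) : a ∣ M.det * y j := by
  have hadj : M.det • y = M.adjugate *ᵥ (M *ᵥ y) := by
    rw [mulVec_mulVec, adjugate_mul, smul_mulVec, one_mulVec]
  rw [← smul_eq_mul, ← Pi.smul_apply, hadj]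
  exact Finset.dvd_sum fun r _ => dvd_mul_of_dvd_right (h r) _

theorem det_updateCol_sum_smul {α : Type*} (A : Matrix ι ι R) (j : ι) (s : Finset α)
    (c : α → R) (v : α → ι → R) :
    (A.updateCol j (∑ l ∈ s, c l • v l)).det =
      ∑ l ∈ s, c l * (A.updateCol j (v l)).det := by
  simp only [← cramer_apply, map_sum, map_smul, Finset.sum_apply, Pi.smul_apply, smul_eq_mul]

end Matrix

section DiscriminationMatrix
open scoped Matrix
variable {n m : ℕ} {f : ℝ[X]}

noncomputable def discRow (m : ℕ) (f : ℝ[X]) (r : ℕ) : ℝ[X] :=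
  (if r % 2 = 0 then f else derivative f) * X ^ (m - 1 - r / 2)

theorem gcd_dvd_discRow (m r : ℕ) : EuclideanDomain.gcd f (derivative f) ∣ discRow m f r := by
  unfold discRow
  split_ifs
  · exact (EuclideanDomain.gcd_dvd_left _ _).mul_right _
  · exact (EuclideanDomain.gcd_dvd_right _ _).mul_right _

theorem natDegree_discRow_le (hdeg : f.natDegree ≤ n) (r : ℕ) :
    (discRow m f r).natDegree ≤ n + (m - 1 - r / 2) := by
  refine natDegree_mul_le.trans (add_le_add ?_ (natDegree_X_pow_le _))
  split_ifs
  · exact hdeg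
  · exact (natDegree_derivative_le f).trans (by omega)

theorem coeff_discRow (hdeg : f.natDegree ≤ n) {r c : ℕ} (hr : r < 2 * m)
    (hc : c ≤ n + m - 1) :
    (discRow m f r).coeff (n + m - 1 - c) = discEntry n f r c := by
  obtain ⟨i, rfl | rfl⟩ := Nat.even_or_odd' r
  · rw [discRow, discEntry, if_pos (Nat.mul_mod_right 2 i), if_pos (Nat.mul_mod_right 2 i),
      Nat.mul_div_cancel_left i two_pos, coeff_mul_X_pow']
    split_ifs with h₁ h₂ h₂
    · congr 1
      omega
    · exact coeff_eq_zero_of_natDegree_lt (by omega)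
    · omega
    · rfl
  · have hi : (2 * i + 1) / 2 = i := by omega
    rw [discRow, discEntry, if_neg (by omega), if_neg (by omega), hi, coeff_mul_X_pow']
    split_ifs with h₁ h₂ h₂
    · have he : n + m - 1 - c - (m - 1 - i) + 1 = n - (c - (i + 1)) := by omega
      rw [coeff_derivative, ← he]
      push_cast
      ring
    · rw [coeff_derivative, coeff_eq_zero_of_natDegree_lt (by omega), zero_mul]
    · omega
    · rfl

theorem discRow_eq_sum (hdeg : f.natDegree ≤ n) {r : ℕ} (hr : r < 2 * m) :
    discRow m f r =
      ∑ c ∈ Finset.range (n + m), C (discEntry n f r c) * X ^ (n + m - 1 - c) := by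
  have hlt : (discRow m f r).natDegree < n + m :=
    (natDegree_discRow_le hdeg r).trans_lt (by omega)
  rw [as_sum_range' _ _ hlt, ← Finset.sum_range_reflect]
  refine Finset.sum_congr rfl fun c hc => ?_
  rw [coeff_discRow hdeg hr (by rw [Finset.mem_range] at hc; omega), C_mul_X_pow_eq_monomial]

theorem discSeq_eq_det_subM_zero (n : ℕ) (f : ℝ[X]) (m : ℕ) :
    discSeq n f m = (subM n f m 0).det := by
  unfold discSeq subM
  congr 1
  ext i j
  simp only [Matrix.of_apply, add_zero]
  split_ifs with h
  · rfl
  · congr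
    omega

theorem discSeq_one (n : ℕ) (f : ℝ[X]) : discSeq n f 1 = n * f.coeff n ^ 2 := by
  rw [discSeq, Matrix.det_fin_two]
  rcases Nat.eq_zero_or_pos n with rfl | hn
  · simp [discEntry]
  · simp [discEntry, Nat.one_le_iff_ne_zero.mpr hn.ne']
    ring

theorem coeff_deltaPoly_self (n : ℕ) (f : ℝ[X]) (k : ℕ) :
    (deltaPoly n f k).coeff k = discSeq n f (n - k) := by
  rw [deltaPoly, finsetSum_coeff, Finset.sum_eq_single 0]
  · rw [coeff_C_mul_X_pow, if_pos (Nat.sub_zero k).symm, discSeq_eq_det_subM_zero]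
  · intro i hi hi0
    rw [coeff_C_mul_X_pow, if_neg (by rw [Finset.mem_range] at hi; omega)]
  · simp

theorem natDegree_deltaPoly_le (n : ℕ) (f : ℝ[X]) (k : ℕ) :
    (deltaPoly n f k).natDegree ≤ k :=
  natDegree_sum_le_of_forall_le _ _ fun i _ =>
    (natDegree_C_mul_X_pow_le _ _).trans (Nat.sub_le k i)

noncomputable def deltaMatrix (n : ℕ) (f : ℝ[X]) (m k : ℕ) (j : Fin (2 * m)) :
    Matrix (Fin (2 * m)) (Fin (2 * m)) ℝ[X] :=
  ((subM n f m 0).map C).updateCol j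
    (∑ l ∈ Finset.range (k + 1),
      (X : ℝ[X]) ^ (k - l) • fun r : Fin (2 * m) => C (discEntry n f r (2 * m - 1 + l)))

theorem subM_map_C (n : ℕ) (f : ℝ[X]) {m : ℕ} {j : Fin (2 * m)} (hj : (j : ℕ) = 2 * m - 1)
    (l : ℕ) :
    (subM n f m l).map C =
      ((subM n f m 0).map C).updateCol j fun r => C (discEntry n f r (2 * m - 1 + l)) := by
  ext r c
  rw [Matrix.updateCol_apply]
  split_ifs with hc
  · subst hc
    simp [subM, hj]
  · have hc' : (c : ℕ) < 2 * m - 1 := by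
      have := c.isLt
      have := Fin.val_ne_of_ne hc
      omega
    simp [subM, hc']

theorem det_deltaMatrix (n : ℕ) (f : ℝ[X]) (k : ℕ) {j : Fin (2 * (n - k))}
    (hj : (j : ℕ) = 2 * (n - k) - 1) :
    (deltaMatrix n f (n - k) k j).det = deltaPoly n f k := by
  rw [deltaMatrix, Matrix.det_updateCol_sum_smul, deltaPoly]
  refine Finset.sum_congr rfl fun l _ => ?_
  rw [← subM_map_C n f hj, ← RingHom.mapMatrix_apply, ← RingHom.map_det, mul_comm]

theorem deltaMatrix_mulVec (hdeg : f.natDegree ≤ n) {k : ℕ} (hmk : m + k = n)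
    {j : Fin (2 * m)} (hj : (j : ℕ) = 2 * m - 1) (r : Fin (2 * m)) :
    (deltaMatrix n f m k j *ᵥ fun c => if c = j then 1 else X ^ (n + m - 1 - c)) r =
      discRow m f r := by
  set T := ∑ l ∈ Finset.range (k + 1), X ^ (k - l) * C (discEntry n f r (2 * m - 1 + l))
  set g : ℕ → ℝ[X] := fun c =>
    if c < 2 * m - 1 then C (discEntry n f r c) * X ^ (n + m - 1 - c) else T
  have hg : ∀ c : Fin (2 * m),
      deltaMatrix n f m k j r c * (if c = j then 1 else X ^ (n + m - 1 - c)) = g c := by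
    intro c
    by_cases hc : c = j
    · subst hc
      simp [deltaMatrix, g, T, hj, Finset.sum_apply]
    · have hc' : (c : ℕ) < 2 * m - 1 := by
        have := c.isLt
        have := Fin.val_ne_of_ne hc
        omega
      simp [deltaMatrix, g, hc, hc', subM]
  calc _ = ∑ c : Fin (2 * m), g c := Finset.sum_congr rfl fun c _ => hg c
    _ = ∑ c ∈ Finset.range (2 * m - 1 + 1), g c := by
      rw [Fin.sum_univ_eq_sum_range g, Nat.sub_add_cancel (by omega)]
    _ = ∑ c ∈ Finset.range (2 * m - 1), C (discEntry n f r c) * X ^ (n + m - 1 - c) + T := by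
      rw [Finset.sum_range_succ]
      congr 1
      · exact Finset.sum_congr rfl fun c hc => if_pos (Finset.mem_range.mp hc)
      · exact if_neg (lt_irrefl _)
    _ = discRow m f r := by
      rw [discRow_eq_sum hdeg r.isLt, show n + m = 2 * m - 1 + (k + 1) by omega,
        Finset.sum_range_add]
      congr 1
      refine Finset.sum_congr rfl fun l _ => ?_
      rw [mul_comm, show 2 * m - 1 + (k + 1) - 1 - (2 * m - 1 + l) = k - l by omega]

theorem gcd_dvd_deltaPoly (hdeg : f.natDegree ≤ n) {k : ℕ} (hk : k < n) :
    EuclideanDomain.gcd f (derivative f) ∣ deltaPoly n f k := by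
  let j : Fin (2 * (n - k)) := ⟨2 * (n - k) - 1, by omega⟩
  have := (deltaMatrix n f (n - k) k j).dvd_det_mul_of_dvd_mulVec
    (fun r => deltaMatrix_mulVec hdeg (Nat.sub_add_cancel hk.le) (j := j) rfl r ▸
      gcd_dvd_discRow (n - k) r) j
  rwa [if_pos rfl, mul_one, det_deltaMatrix n f k rfl] at this

noncomputable def parityPart (m : ℕ) (v : Fin (2 * m) → ℝ) (p : ℕ) : ℝ[X] :=
  ∑ r : Fin (2 * m), if (r : ℕ) % 2 = p then C (v r) * X ^ (m - 1 - r / 2) else 0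

theorem sum_C_mul_discRow (m : ℕ) (f : ℝ[X]) (v : Fin (2 * m) → ℝ) :
    ∑ r : Fin (2 * m), C (v r) * discRow m f r =
      parityPart m v 0 * f + parityPart m v 1 * derivative f := by
  simp only [parityPart, Finset.sum_mul, ← Finset.sum_add_distrib]
  refine Finset.sum_congr rfl fun r _ => ?_
  rw [discRow]
  split_ifs <;> first | omega | ring

theorem coeff_parityPart (m : ℕ) (v : Fin (2 * m) → ℝ) (r : Fin (2 * m)) :
    (parityPart m v (r % 2)).coeff (m - 1 - r / 2) = v r := by
  rw [parityPart, finsetSum_coeff, Finset.sum_eq_single r]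
  · simp
  · intro r' _ hr'
    split_ifs with h
    · rw [coeff_C_mul_X_pow, if_neg]
      have := r.isLt
      have := r'.isLt
      have := Fin.val_ne_of_ne hr'
      omega
    · exact coeff_zero _
  · simp

theorem natDegree_parityPart_le (m : ℕ) (v : Fin (2 * m) → ℝ) (p : ℕ) :
    (parityPart m v p).natDegree ≤ m - 1 :=
  natDegree_sum_le_of_forall_le _ _ fun r _ => by
    split_ifs
    · exact (natDegree_C_mul_X_pow_le _ _).trans (Nat.sub_le _ _)
    · simp

theorem eq_zero_of_sum_C_mul_discRow_eq_zero (hdeg : f.natDegree = n)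
    (hm : m + (EuclideanDomain.gcd f (derivative f)).natDegree ≤ n) {v : Fin (2 * m) → ℝ}
    (hv : ∑ r : Fin (2 * m), C (v r) * discRow m f r = 0) : v = 0 := by
  rcases Nat.eq_zero_or_pos m with rfl | hm₀
  · funext r
    have := r.isLt
    omega
  have hf : f ≠ 0 := by
    rintro rfl
    simp at hdeg
    omega
  rw [sum_C_mul_discRow] at hv
  have hw : parityPart m v 1 = 0 := by
    by_contra hw
    have := natDegree_le_natDegree_gcd_add_of_mul_add_mul_eq_zero hw hv
    have := natDegree_parityPart_le m v 1
    omega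
  have hu : parityPart m v 0 = 0 := by
    simpa [hw, hf] using hv
  funext r
  rw [← coeff_parityPart m v r]
  rcases Nat.mod_two_eq_zero_or_one r with h | h <;> simp [h, hu, hw]

theorem discSeq_sub_natDegree_gcd_ne_zero (hdeg : f.natDegree = n) :
    discSeq n f (n - (EuclideanDomain.gcd f (derivative f)).natDegree) ≠ 0 := by
  set d := (EuclideanDomain.gcd f (derivative f)).natDegree
  set m := n - d
  intro hD
  obtain ⟨v, hv₀, hv⟩ := Matrix.exists_vecMul_eq_zero_iff.mpr hD
  have hm : 0 < m := by
    obtain ⟨r, -⟩ := Function.ne_iff.mp hv₀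
    have := r.isLt
    omega
  have hf : f ≠ 0 := by
    rintro rfl
    simp at hdeg
    omega
  have hgcd : EuclideanDomain.gcd f (derivative f) ≠ 0 :=
    fun h => hf (EuclideanDomain.gcd_eq_zero_iff.mp h).1
  have hdn : d ≤ n := hdeg ▸ natDegree_le_of_dvd (EuclideanDomain.gcd_dvd_left _ _) hf
  refine hv₀ (eq_zero_of_sum_C_mul_discRow_eq_zero hdeg (m := m) (by omega) ?_)
  have hcoeff : ∀ c < 2 * m,
      (∑ r : Fin (2 * m), C (v r) * discRow m f r).coeff (n + m - 1 - c) = 0 := by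
    intro c hc
    have := congrFun hv ⟨c, hc⟩
    simp only [Matrix.vecMul, dotProduct, Matrix.of_apply, Pi.zero_apply] at this
    rw [finsetSum_coeff, ← this]
    exact Finset.sum_congr rfl fun r _ => by
      rw [coeff_C_mul, coeff_discRow hdeg.le r.isLt (by omega)]
  refine eq_zero_of_dvd_of_degree_lt
    (Finset.dvd_sum fun r _ => (gcd_dvd_discRow m r).mul_left _) ?_
  rw [degree_eq_natDegree hgcd, degree_lt_iff_coeff_zero]
  intro j hj
  by_cases hj' : j ≤ n + m - 1
  · simpa [show n + m - 1 - (n + m - 1 - j) = j by omega] using hcoeff (n + m - 1 - j) (by omega)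
  · rw [finsetSum_coeff]
    exact Finset.sum_eq_zero fun r _ => by
      rw [coeff_C_mul, coeff_eq_zero_of_natDegree_lt
        ((natDegree_discRow_le hdeg.le r).trans_lt (by omega)), mul_zero]

theorem associated_deltaPoly_gcd (hdeg : f.natDegree = n) {t : ℕ} (ht : 1 ≤ t) (htn : t ≤ n)
    (hDt : discSeq n f t ≠ 0) (hvanish : ∀ j, t < j → j ≤ n → discSeq n f j = 0) :
    Associated (deltaPoly n f (n - t)) (EuclideanDomain.gcd f (derivative f)) := by
  set k := n - t
  have hcoeff : (deltaPoly n f k).coeff k ≠ 0 := by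
    rwa [coeff_deltaPoly_self, show n - k = t by omega]
  have hΔ : deltaPoly n f k ≠ 0 := fun h => hcoeff (by rw [h, coeff_zero])
  have hk : k ≤ (EuclideanDomain.gcd f (derivative f)).natDegree := by
    by_contra hlt
    exact discSeq_sub_natDegree_gcd_ne_zero hdeg (hvanish _ (by omega) (by omega))
  exact (associated_of_dvd_of_natDegree_le (gcd_dvd_deltaPoly hdeg.le (by omega)) hΔ
    ((natDegree_deltaPoly_le n f k).trans hk)).symm

end DiscriminationMatrix

section SignList

theorem signOf_eq_zero_iff {x : ℝ} : signOf x = 0 ↔ x = 0 := by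
  unfold signOf
  split_ifs with h₁ h₂ <;> simp <;> linarith

theorem List.countP_lt_range (t N : ℕ) :
    (List.range N).countP (fun p => decide (t < p)) = N - (t + 1) := by
  rw [← Multiset.coe_countP, ← Multiset.range, Multiset.countP_eq_card_filter,
    ← Finset.range_val, ← Finset.filter_val, ← Finset.card_def,
    show (Finset.range N).filter (t < ·) = Finset.Ioo t N by ext; simp [and_comm], Nat.card_Ioo]
  omega

theorem revisedEntry_eq_zero_iff {s : List ℤ} {t : ℕ} (h₀ : s.getD 0 0 ≠ 0)
    (ht : s.getD t 0 ≠ 0) (htail : ∀ j, t < j → s.getD j 0 = 0) (p : ℕ) :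
    revisedEntry s p = 0 ↔ t < p := by
  have htlen : t < s.length := by
    by_contra h
    exact ht (List.getD_eq_default _ _ (by omega))
  unfold revisedEntry
  split_ifs with hp hinner
  · exact ⟨fun h => absurd h hp, fun h => absurd (htail p h) hp⟩
  · obtain ⟨-, j, -, hpj, hj⟩ := hinner
    refine iff_of_false (mul_ne_zero (pow_ne_zero _ (by norm_num)) ?_)
      fun htp => hj (htail j (by omega))
    exact Nat.findGreatest_spec (P := fun i => s.getD i 0 ≠ 0) (Nat.zero_le p) h₀
  · refine iff_of_true rfl <| lt_of_not_ge fun hpt =>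
      hinner ⟨⟨0, ?_, h₀⟩, t, htlen, ?_, ht⟩
    · rcases Nat.eq_zero_or_pos p with rfl | hp₀
      · exact absurd h₀ hp
      · exact hp₀
    · rcases hpt.lt_or_eq with hpt | rfl
      · exact hpt
      · exact absurd ht hp

theorem count_zero_revisedSignList {s : List ℤ} {t : ℕ} (h₀ : s.getD 0 0 ≠ 0)
    (ht : s.getD t 0 ≠ 0) (htail : ∀ j, t < j → s.getD j 0 = 0) :
    (revisedSignList s).count 0 = s.length - (t + 1) := by
  rw [revisedSignList, List.count_eq_countP, List.countP_map, ← List.countP_lt_range]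
  refine List.countP_congr fun p _ => ?_
  simp [revisedEntry_eq_zero_iff h₀ ht htail p]

theorem getD_signList_eq_zero_iff {n : ℕ} {f : ℝ[X]} {p : ℕ} :
    (signList n f).getD p 0 = 0 ↔ (p < n → discSeq n f (p + 1) = 0) := by
  by_cases hp : p < n
  · simp [signList, hp, signOf_eq_zero_iff]
  · simp [signList, hp]

theorem count_zero_revisedSignList_signList {n : ℕ} {f : ℝ[X]} {t : ℕ}
    (hD₁ : discSeq n f 1 ≠ 0) (ht : 1 ≤ t) (htn : t ≤ n) (hDt : discSeq n f t ≠ 0)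
    (hvanish : ∀ j, t < j → j ≤ n → discSeq n f j = 0) :
    (revisedSignList (signList n f)).count 0 = n - t := by
  have := count_zero_revisedSignList (s := signList n f) (t := t - 1)
    (by rw [Ne, getD_signList_eq_zero_iff]; exact fun h => hD₁ (h (by omega)))
    (by rw [Ne, getD_signList_eq_zero_iff, Nat.sub_add_cancel ht]
        exact fun h => hDt (h (by omega)))
    (fun j hj => getD_signList_eq_zero_iff.mpr fun hjn => hvanish _ (by omega) (by omega))
  simpa [signList, Nat.sub_add_cancel ht] using this

end SignList

/-- Let `f` be a real polynomial of degree `n` with nonzero leading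
coefficient, and suppose the revised sign list of its discriminant sequence contains
exactly `k` zeros.  Then the polynomial `Δ_k(f)` of the multiple factor sequence is a
greatest common divisor of `f` and its derivative `f'`; that is, `Δ_k(f)` equals
`gcd(f, f')` up to a nonzero real constant factor. -/
theorem statement8 (n : ℕ) (f : Polynomial ℝ) (hf : f ≠ 0) (hdeg : f.natDegree = n)
    (k : ℕ) (hk : (revisedSignList (signList n f)).count 0 = k) :
    Associated (deltaPoly n f k)
      (EuclideanDomain.gcd f (Polynomial.derivative f)) := by
  rcases Nat.eq_zero_or_pos n with rfl | hn
  · obtain ⟨a, rfl⟩ := natDegree_eq_zero.mp hdeg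
    obtain rfl : k = 0 := by simpa [revisedSignList, signList] using hk.symm
    have ha : a ≠ 0 := by rintro rfl; simp at hf
    have hΔ : deltaPoly 0 (C a) 0 = 1 := by simp [deltaPoly, Matrix.det_isEmpty]
    rw [hΔ, derivative_C, EuclideanDomain.gcd_zero_right]
    exact (associated_one_iff_isUnit.mpr (isUnit_C.mpr ha.isUnit)).symm
  have hD₁ : discSeq n f 1 ≠ 0 := by
    have : f.coeff n ≠ 0 := hdeg ▸ leadingCoeff_ne_zero.mpr hf
    rw [discSeq_one]
    positivity
  set t := Nat.findGreatest (fun j => discSeq n f j ≠ 0) n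
  have ht : 1 ≤ t := Nat.le_findGreatest hn hD₁
  have htn : t ≤ n := Nat.findGreatest_le n
  have hDt : discSeq n f t ≠ 0 :=
    Nat.findGreatest_spec (P := fun j => discSeq n f j ≠ 0) hn hD₁
  have hvanish : ∀ j, t < j → j ≤ n → discSeq n f j = 0 := fun j h₁ h₂ =>
    not_not.mp (Nat.findGreatest_is_greatest h₁ h₂)
  rw [← hk, count_zero_revisedSignList_signList hD₁ ht htn hDt hvanish]
  exact associated_deltaPoly_gcd hdeg ht htn hDt hvanish
end
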